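/- Let A and B be finite groups such that Nil_A(a) is a subgroup of A for every a ∈ A and Nil_B(b) is a subgroup of B for every b ∈ B. Then Nil_{A×B}(x) is a subgroup of A × B for every element x ∈ A × B; indeed Nil_{A×B}((a,b)) = Nil_A(a) × Nil_B(b). -/

import Mathlib

/-- The nilpotent neighborhood of `x`: elements `y` such that `⟨x,y⟩` is nilpotent. -/
def nilNbhd {G : Type*} [Group G] (x : G) : Set G :=
  {y | Group.IsNilpotent ↥(Subgroup.closure ({x, y} : Set G))}

/-- The hypercenter of a finite group: the stable term of the upper central series. -/
noncomputable def hypercenter (G : Type*) [Group G] : Subgroup G :=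
  Subgroup.upperCentralSeries G (Nat.card G)

instance hypercenter_normal (G : Type*) [Group G] : (hypercenter G).Normal :=
  inferInstanceAs (Subgroup.upperCentralSeries G (Nat.card G)).Normal

/-- The graph Γ(G): induced subgraph of the nilpotent graph on `G \ Z_∞(G)`. -/
def nilGraph (G : Type*) [Group G] : SimpleGraph {x : G // x ∉ hypercenter G} where
  Adj a b := a ≠ b ∧ Group.IsNilpotent ↥(Subgroup.closure ({a.1, b.1} : Set G))
  symm := ⟨fun a b ⟨h1, h2⟩ => ⟨h1.symm, by rwa [Set.pair_comm]⟩⟩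
  loopless := ⟨fun a h => h.1 rfl⟩

/-- The commuting graph on the non-central elements. -/
def commGraph (G : Type*) [Group G] : SimpleGraph {x : G // x ∉ Subgroup.center G} where
  Adj a b := a ≠ b ∧ a.1 * b.1 = b.1 * a.1
  symm := ⟨fun a b ⟨h1, h2⟩ => ⟨h1.symm, h2.symm⟩⟩
  loopless := ⟨fun a h => h.1 rfl⟩

/-- Diameter of a connected component: diameter of the induced subgraph on its support. -/
noncomputable def compDiam {V : Type*} (Γ : SimpleGraph V) (c : Γ.ConnectedComponent) : ℕ :=
  (Γ.induce c.supp).diam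

/-- `H` is a Frobenius complement in `G`. -/
def IsFrobeniusComplement {G : Type*} [Group G] (H : Subgroup G) : Prop :=
  H ≠ ⊥ ∧ H ≠ ⊤ ∧ ∀ g : G, g ∉ H → H ⊓ H.map (MulAut.conj g).toMonoidHom = ⊥

/-- `G` is a Frobenius group. -/
def IsFrobenius (G : Type*) [Group G] : Prop :=
  ∃ H : Subgroup G, IsFrobeniusComplement H

/-- `K` is the Frobenius kernel corresponding to the complement `H`. -/
def IsFrobeniusKernelOf {G : Type*} [Group G] (K H : Subgroup G) : Prop :=
  IsFrobeniusComplement H ∧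
    (K : Set G) = {1} ∪ {x : G | ∀ g : G, x ∉ H.map (MulAut.conj g).toMonoidHom}

/-- `K` is a Frobenius kernel of `G`. -/
def IsFrobeniusKernel {G : Type*} [Group G] (K : Subgroup G) : Prop :=
  ∃ H : Subgroup G, IsFrobeniusKernelOf K H

/-- `G` is a 2-Frobenius group. -/
def IsTwoFrobenius (G : Type*) [Group G] : Prop :=
  ∃ K L : Subgroup G, ∃ hK : K.Normal, L.Normal ∧ K ≤ L ∧
    IsFrobeniusKernel (K.subgroupOf L) ∧
    (haveI := hK; IsFrobeniusKernel (Subgroup.map (QuotientGroup.mk' K) L))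

/-- The Fitting subgroup: the largest normal nilpotent subgroup (of a finite group). -/
def fitting (G : Type*) [Group G] : Subgroup G :=
  sSup {H : Subgroup G | H.Normal ∧ Group.IsNilpotent ↥H}

/-! The subgroup of `A × B` generated by `(a, b), (c, d)` projects onto `⟨a, c⟩` and `⟨b, d⟩` and
embeds into their product, so it is nilpotent exactly when both `⟨a, c⟩` and `⟨b, d⟩` are.
Hence `Nil(a, b) = Nil(a) × Nil(b)`, a product of subgroups when both factors are subgroups. -/

theorem Group.isNilpotent_of_injective {G H : Type*} [Group G] [Group H] [Group.IsNilpotent H]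
    {f : G →* H} (hf : Function.Injective f) : Group.IsNilpotent G :=
  Group.nilpotent_of_mulEquiv (MonoidHom.ofInjective hf).symm

namespace Subgroup

variable {A B : Type*} [Group A] [Group B]

theorem isNilpotent_iff_map_fst_and_map_snd (H : Subgroup (A × B)) :
    Group.IsNilpotent H ↔
      Group.IsNilpotent (H.map (MonoidHom.fst A B)) ∧
        Group.IsNilpotent (H.map (MonoidHom.snd A B)) := by
  constructor
  · intro hH
    exact ⟨Group.nilpotent_of_surjective _ ((MonoidHom.fst A B).subgroupMap_surjective H),
      Group.nilpotent_of_surjective _ ((MonoidHom.snd A B).subgroupMap_surjective H)⟩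
  · rintro ⟨hfst, hsnd⟩
    refine Group.isNilpotent_of_injective
      (f := ((MonoidHom.fst A B).subgroupMap H).prod ((MonoidHom.snd A B).subgroupMap H)) ?_
    intro x y hxy
    simp only [MonoidHom.prod_apply, Prod.mk.injEq] at hxy
    exact Subtype.ext (Prod.ext (congrArg Subtype.val hxy.1) (congrArg Subtype.val hxy.2))

theorem map_fst_closure_pair (x y : A × B) :
    (closure ({x, y} : Set (A × B))).map (MonoidHom.fst A B) = closure {x.1, y.1} := by
  rw [MonoidHom.map_closure, Set.image_pair]
  rfl

theorem map_snd_closure_pair (x y : A × B) :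
    (closure ({x, y} : Set (A × B))).map (MonoidHom.snd A B) = closure {x.2, y.2} := by
  rw [MonoidHom.map_closure, Set.image_pair]
  rfl

end Subgroup

theorem nilNbhd_prod {A B : Type*} [Group A] [Group B] (x : A × B) :
    nilNbhd x = nilNbhd x.1 ×ˢ nilNbhd x.2 := by
  ext y
  change Group.IsNilpotent _ ↔ Group.IsNilpotent _ ∧ Group.IsNilpotent _
  rw [Subgroup.isNilpotent_iff_map_fst_and_map_snd, Subgroup.map_fst_closure_pair,
    Subgroup.map_snd_closure_pair]

theorem stmt_9_general (A B : Type*) [Group A] [Group B]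
    (hA : ∀ a : A, ∃ N : Subgroup A, (N : Set A) = nilNbhd a)
    (hB : ∀ b : B, ∃ N : Subgroup B, (N : Set B) = nilNbhd b) :
    ∀ x : A × B, (∃ N : Subgroup (A × B), (N : Set (A × B)) = nilNbhd x) ∧
      nilNbhd x = nilNbhd x.1 ×ˢ nilNbhd x.2 := by
  intro x
  obtain ⟨NA, hNA⟩ := hA x.1
  obtain ⟨NB, hNB⟩ := hB x.2
  exact ⟨⟨NA.prod NB, by rw [Subgroup.coe_prod, hNA, hNB, nilNbhd_prod]⟩, nilNbhd_prod x⟩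

/-- Nilpotent neighborhoods in a direct product. -/
theorem stmt_9 (A B : Type*) [Group A] [Group B] [Finite A] [Finite B]
    (hA : ∀ a : A, ∃ N : Subgroup A, (N : Set A) = nilNbhd a)
    (hB : ∀ b : B, ∃ N : Subgroup B, (N : Set B) = nilNbhd b) :
    ∀ x : A × B, (∃ N : Subgroup (A × B), (N : Set (A × B)) = nilNbhd x) ∧
      nilNbhd x = nilNbhd x.1 ×ˢ nilNbhd x.2 :=
  stmt_9_general A B hA hB
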